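/- arXiv:2208.13130 — 2 statements merged into one kernel-verified Lean document; each statement's English description precedes it below -/
import Mathlib

section
/- Under the stated assumptions, for every n ∈ ℤ and every sign σ ∈ {1, −1}, the function m has a simple pole at σ·p₁ + nπi with residue −σ·p₁/(3π) + i/6 − n·i/3; precisely, (w − (σ·p₁ + nπi))·m(w) tends to −σ·p₁/(3π) + i/6 − n·i/3 as w → σ·p₁ + nπi (w ≠ σ·p₁ + nπi). In particular the residues at p₁, p₁ + πi, p₁ − πi, p₁ + 2πi, p₁ − 2πi are −p₁/(3π) + i/6, −p₁/(3π) − i/6, −p₁/(3π) + i/2, −p₁/(3π) − i/2, −p₁/(3π) + 5i/6 respectively, and the residues at −p₁, −p₁ + πi, −p₁ − πi are p₁/(3π) + i/6, p₁/(3π) − i/6, p₁/(3π) + i/2. -/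
/-! The denominator `D w = ω² sinh² w + k²` has derivative `ω² sinh (2w)`, so `G₂ = I · D' / D` is
`I` times a logarithmic derivative. Since `sinh²` has period `πi` and is even, every point
`σ p₁ + nπi` is a zero of `D`, and it is simple because `sinh² (2a) = 4 sinh² a cosh² a` depends only
on `sinh² a`, which equals `sinh² p₁ ≠ 0`, while `cosh² p₁ ≠ 0`. At a simple zero `a` of `D` the
function `(w - a) · D' w / D w` tends to `1`, so `(w - a) · m w` tends to `I (π + 2 I a) / (6π)`. -/

open Complex Filter Topology

theorem tendsto_sub_mul_div_of_hasDerivAt {𝕜 : Type*} [NontriviallyNormedField 𝕜]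
    {f g : 𝕜 → 𝕜} {a d : 𝕜} (hf : HasDerivAt f d a) (hfa : f a = 0) (hd : d ≠ 0)
    (hg : ContinuousAt g a) :
    Tendsto (fun w => (w - a) * (g w / f w)) (𝓝[≠] a) (𝓝 (g a / d)) := by
  have hslope : Tendsto (fun w => (w - a) / f w) (𝓝[≠] a) (𝓝 d⁻¹) := by
    refine ((hasDerivAt_iff_tendsto_slope.mp hf).inv₀ hd).congr fun w => ?_
    rw [slope_def_field, hfa, sub_zero, inv_div]
  rw [div_eq_mul_inv]
  refine ((hg.tendsto.mono_left nhdsWithin_le_nhds).mul hslope).congr fun w => ?_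
  ring

namespace Complex

theorem sinh_sq_periodic : Function.Periodic (fun z => sinh z ^ 2) (Real.pi * I) := fun z => by
  simp only [sinh_add_pi_mul_I, neg_sq]

theorem sinh_two_mul_sq (z : ℂ) : sinh (2 * z) ^ 2 = 4 * sinh z ^ 2 * (sinh z ^ 2 + 1) := by
  rw [sinh_two_mul, ← cosh_sq]
  ring

theorem sinh_sq_add_int_mul_pi_mul_I (z : ℂ) (n : ℤ) :
    sinh (z + n * Real.pi * I) ^ 2 = sinh z ^ 2 := by
  simpa only [mul_assoc] using sinh_sq_periodic.int_mul n z

theorem sinh_two_mul_ne_zero_of_sinh_sq_eq {a z : ℂ} (h : sinh a ^ 2 = sinh z ^ 2)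
    (hz : sinh (2 * z) ≠ 0) : sinh (2 * a) ≠ 0 := by
  rw [← pow_ne_zero_iff two_ne_zero, sinh_two_mul_sq, h, ← sinh_two_mul_sq]
  exact pow_ne_zero 2 hz

theorem hasDerivAt_const_mul_sinh_sq_add (c e z : ℂ) :
    HasDerivAt (fun w => c * sinh w ^ 2 + e) (c * sinh (2 * z)) z := by
  refine ((((hasDerivAt_sinh z).fun_pow 2).const_mul c).add_const e).congr_deriv ?_
  rw [sinh_two_mul]
  ring

theorem tendsto_sub_mul_mul_div_sinh_sq_add {ω k a : ℂ} {g : ℂ → ℂ} (hg : ContinuousAt g a)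
    (ha : ω ^ 2 * sinh a ^ 2 + k ^ 2 = 0) (h2a : ω ^ 2 * sinh (2 * a) ≠ 0) :
    Tendsto (fun w => (w - a) * (g w * (ω ^ 2 * sinh (2 * w) / (ω ^ 2 * sinh w ^ 2 + k ^ 2))))
      (𝓝[≠] a) (𝓝 (g a)) := by
  have hnum : ContinuousAt (fun w => g w * (ω ^ 2 * sinh (2 * w))) a :=
    hg.mul (by fun_prop)
  simpa only [mul_div_assoc, mul_div_cancel_right₀ _ h2a] using
    tendsto_sub_mul_div_of_hasDerivAt (hasDerivAt_const_mul_sinh_sq_add _ _ a) ha h2a hnum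

end Complex

theorem residues_of_m_general
    (ω : ℂ) (hω : 0 < ω.im) (k : ℝ) (hk : 0 < k)
    (G₂ m : ℂ → ℂ)
    (hG₂ : ∀ w : ℂ, G₂ w = I * ω ^ 2 * Complex.sinh (2 * w) /
      (ω ^ 2 * (Complex.sinh w) ^ 2 + (k : ℂ) ^ 2))
    (hm : ∀ w : ℂ, m w = ((Real.pi + 2 * I * w) / (6 * Real.pi)) * G₂ w)
    (p₁ : ℂ) (hp : Complex.sinh p₁ = I * k / ω) (hc : Complex.cosh p₁ ≠ 0) :
    ∀ n : ℤ, ∀ σ : ℂ, (σ = 1 ∨ σ = -1) →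
      Tendsto (fun w => (w - (σ * p₁ + (n : ℂ) * Real.pi * I)) * m w)
        (𝓝[≠] (σ * p₁ + (n : ℂ) * Real.pi * I))
        (𝓝 (-σ * p₁ / (3 * Real.pi) + I / 6 - (n : ℂ) * I / 3)) := by
  intro n σ hσ
  set a := σ * p₁ + (n : ℂ) * Real.pi * I
  have hω₀ : ω ≠ 0 := by rintro rfl; simp at hω
  have hk₀ : (k : ℂ) ≠ 0 := by exact_mod_cast hk.ne'
  have hsinh_sq : sinh a ^ 2 = sinh p₁ ^ 2 := by
    rw [sinh_sq_add_int_mul_pi_mul_I]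
    rcases hσ with rfl | rfl <;> simp
  have hzero : ω ^ 2 * sinh a ^ 2 + (k : ℂ) ^ 2 = 0 := by
    rw [hsinh_sq, hp]
    field_simp
    rw [I_sq]
    ring
  have hsinh₀ : sinh p₁ ≠ 0 := by rw [hp]; simp [hω₀, hk₀]
  have hsimple : ω ^ 2 * sinh (2 * a) ≠ 0 := by
    refine mul_ne_zero (pow_ne_zero 2 hω₀) (sinh_two_mul_ne_zero_of_sinh_sq_eq hsinh_sq ?_)
    simp [sinh_two_mul, hsinh₀, hc]
  have hm' : m = fun w => ((Real.pi + 2 * I * w) / (6 * Real.pi) * I) *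
      (ω ^ 2 * sinh (2 * w) / (ω ^ 2 * sinh w ^ 2 + (k : ℂ) ^ 2)) := by
    funext w
    rw [hm, hG₂]
    ring
  have hπ : (Real.pi : ℂ) ≠ 0 := by exact_mod_cast Real.pi_ne_zero
  rw [hm']
  convert tendsto_sub_mul_mul_div_sinh_sq_add (g := fun w => (Real.pi + 2 * I * w) /
    (6 * Real.pi) * I) (by fun_prop) hzero hsimple using 2
  field_simp
  linear_combination (-6 * σ * p₁ - 6 * Real.pi * I * n) * I_sq

theorem residues_of_m
    (ω : ℂ) (hω : 0 < ω.im) (k : ℝ) (hk : 0 < k)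
    (G₂ m : ℂ → ℂ)
    (hG₂ : ∀ w : ℂ, G₂ w = I * ω ^ 2 * Complex.sinh (2 * w) /
      (ω ^ 2 * (Complex.sinh w) ^ 2 + (k : ℂ) ^ 2))
    (hm : ∀ w : ℂ, m w = ((Real.pi + 2 * I * w) / (6 * Real.pi)) * G₂ w)
    (p₁ : ℂ) (hp : Complex.sinh p₁ = I * k / ω) (hc : Complex.cosh p₁ ≠ 0)
    (hre : p₁.re ≠ 0) :
    ∀ n : ℤ, ∀ σ : ℂ, (σ = 1 ∨ σ = -1) →
      Tendsto (fun w => (w - (σ * p₁ + (n : ℂ) * Real.pi * I)) * m w)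
        (𝓝[≠] (σ * p₁ + (n : ℂ) * Real.pi * I))
        (𝓝 (-σ * p₁ / (3 * Real.pi) + I / 6 - (n : ℂ) * I / 3)) :=
  residues_of_m_general ω hω k hk G₂ m hG₂ hm p₁ hp hc
end

section
/- Under the stated assumptions, the function v := m + Q has vanishing residue at each of the four points −p₁, p₁ + πi, p₁ − πi and −p₁ + 2πi; precisely, for each such point a, (w − a)·(m(w) + Q(w)) tends to 0 as w → a (w ≠ a). (The singularities of m at these points are cancelled by Q, so that v̂₁¹ = m + Q is analytic there, as required by the necessary-and-sufficient conditions for the solution.) -/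
/-!
Since `I * ω ^ 2 * sinh (2 * w)` is `I` times the derivative of
`D w = ω ^ 2 * sinh w ^ 2 + k ^ 2`, the function `G₂` has residue `I` at every simple zero of `D`.
The four points `a` all satisfy `sinh a = -sinh p₁ = -(I * k / ω)` and `cosh a = ± cosh p₁ ≠ 0`,
so they are simple zeros of `D` and `m` has residue `I / 6 - a / (3 * π)` there.

Each term `c * coth ((w - b) / 3)` of `Q` has simple poles exactly at `b + 3πiℤ`, with residue
`3 * c`. At each of the four points exactly one term of `Q` is singular: the terms whose `b` has
the opposite sign of `p₁` are regular because `Re (a - b) = ± 2 * Re p₁ ≠ 0`, the others because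
`a - b = j * π * I` with `3 ∤ j`. The residue of that one term is the negative of the residue
of `m`.
-/

open Complex Filter Topology
open scoped Real

noncomputable def Complex.coth (z : ℂ) : ℂ := Complex.cosh z / Complex.sinh z

namespace Complex

theorem sinh_eq_zero_iff {z : ℂ} : sinh z = 0 ↔ ∃ n : ℤ, z = n * π * I := by
  have hz : sinh z = sin (-(z * I)) * I := by
    rw [← sinh_mul_I]; congr 1; ring_nf; rw [I_sq]; ring
  rw [hz, mul_eq_zero, or_iff_left I_ne_zero, sin_eq_zero_iff]
  constructor
  · rintro ⟨n, hn⟩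
    exact ⟨n, by linear_combination I * hn + z * I_sq⟩
  · rintro ⟨n, hn⟩
    exact ⟨n, by linear_combination (-I) * hn - n * π * I_sq⟩

theorem sinh_ne_zero_of_re_ne_zero {z : ℂ} (hz : z.re ≠ 0) : sinh z ≠ 0 := by
  rintro h
  obtain ⟨n, rfl⟩ := sinh_eq_zero_iff.1 h
  simp at hz

theorem sinh_int_mul_pi_mul_I_div_three_ne_zero {j : ℤ} (hj : ¬ 3 ∣ j) :
    sinh (j * π * I / 3) ≠ 0 := by
  rintro h
  obtain ⟨n, hn⟩ := sinh_eq_zero_iff.1 h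
  have hπI : (π : ℂ) * I ≠ 0 := mul_ne_zero (ofReal_ne_zero.2 Real.pi_ne_zero) I_ne_zero
  have : (j : ℂ) = 3 * n := mul_right_cancel₀ hπI (by linear_combination 3 * hn)
  exact hj ⟨n, by exact_mod_cast this⟩

end Complex

/-- `(w - a) * f w → r` on the punctured neighbourhood of `a`: for `f` meromorphic at `a` this
says that `f` has at most a simple pole at `a`, with residue `r`. -/
def HasResidueAt (f : ℂ → ℂ) (a r : ℂ) : Prop :=
  Tendsto (fun w => (w - a) * f w) (𝓝[≠] a) (𝓝 r)

namespace HasResidueAt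

variable {f g : ℂ → ℂ} {a r s : ℂ}

theorem add (hf : HasResidueAt f a r) (hg : HasResidueAt g a s) :
    HasResidueAt (fun w => f w + g w) a (r + s) := by
  simpa only [HasResidueAt, mul_add] using Tendsto.add hf hg

theorem sub (hf : HasResidueAt f a r) (hg : HasResidueAt g a s) :
    HasResidueAt (fun w => f w - g w) a (r - s) := by
  simpa only [HasResidueAt, mul_sub] using Tendsto.sub hf hg

theorem continuousAt_mul (hf : HasResidueAt f a r) (hg : ContinuousAt g a) :
    HasResidueAt (fun w => g w * f w) a (g a * r) := by
  refine ((hg.tendsto.mono_left nhdsWithin_le_nhds).mul hf).congr fun w => ?_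
  ring

theorem of_continuousAt (hf : ContinuousAt f a) : HasResidueAt f a 0 := by
  have h : ContinuousAt (fun w => (w - a) * f w) a := (continuousAt_id.sub_const a).mul hf
  unfold HasResidueAt
  simpa using h.tendsto.mono_left nhdsWithin_le_nhds

theorem div_of_hasDerivAt {g' : ℂ} (hf : ContinuousAt f a) (hg : HasDerivAt g g' a)
    (hga : g a = 0) (hg' : g' ≠ 0) : HasResidueAt (fun w => f w / g w) a (f a / g') := by
  refine ((hf.tendsto.mono_left nhdsWithin_le_nhds).div
    (hasDerivAt_iff_tendsto_slope.1 hg) hg').congr fun w => ?_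
  simp only [Pi.div_apply, slope_def_field, hga, sub_zero, div_div_eq_mul_div]
  ring

end HasResidueAt

section Coth

variable {a b : ℂ} (c : ℂ)

theorem hasResidueAt_mul_coth_div_three_of_sinh_ne_zero (h : sinh ((a - b) / 3) ≠ 0) :
    HasResidueAt (fun w => c * coth ((w - b) / 3)) a 0 :=
  .of_continuousAt <| continuousAt_const.mul <| by unfold coth; fun_prop (disch := exact h)

theorem hasResidueAt_mul_coth_div_three_of_re_ne_zero (h : (a - b).re ≠ 0) :
    HasResidueAt (fun w => c * coth ((w - b) / 3)) a 0 :=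
  hasResidueAt_mul_coth_div_three_of_sinh_ne_zero c <| sinh_ne_zero_of_re_ne_zero <| by simpa

theorem hasResidueAt_mul_coth_div_three_of_not_dvd (j : ℤ) (hab : a - b = j * π * I)
    (hj : ¬ 3 ∣ j) : HasResidueAt (fun w => c * coth ((w - b) / 3)) a 0 :=
  hasResidueAt_mul_coth_div_three_of_sinh_ne_zero c <| by
    rw [hab]; exact sinh_int_mul_pi_mul_I_div_three_ne_zero hj

theorem hasResidueAt_mul_coth_div_three_of_dvd (j : ℤ) (hab : a - b = j * π * I) (hj : 3 ∣ j) :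
    HasResidueAt (fun w => c * coth ((w - b) / 3)) a (3 * c) := by
  obtain ⟨n, rfl⟩ := hj
  have hsinh : sinh ((a - b) / 3) = 0 :=
    sinh_eq_zero_iff.2 ⟨n, by rw [hab]; push_cast; ring⟩
  have hcosh : cosh ((a - b) / 3) ≠ 0 := by
    intro h
    simpa [h, hsinh] using cosh_sq_sub_sinh_sq ((a - b) / 3)
  have hderiv := (hasDerivAt_sinh _).comp a (((hasDerivAt_id' a).sub_const b).div_const 3)
  have := HasResidueAt.div_of_hasDerivAt (f := fun w => c * cosh ((w - b) / 3))
    (by fun_prop) hderiv hsinh (by simpa using hcosh)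
  convert this using 1
  · simp only [coth, Function.comp_def, mul_div_assoc]
  · field_simp

end Coth

/-- The function `Q` of the statement, with each argument written as `w - b` so that the poles
`b + 3πiℤ` of its terms can be read off. -/
noncomputable def cothCorrection (p α β γ w : ℂ) : ℂ :=
  α * coth ((w - p) / 3) - β * coth ((w - (p + π * I)) / 3) - γ * coth ((w - (p - π * I)) / 3)
    - α * coth ((w - (-p + π * I)) / 3) + β * coth ((w - -p) / 3)
    + γ * coth ((w - (-p - π * I)) / 3)

section CothCorrection

variable {p a r r₁ r₂ r₃ r₄ r₅ r₆ : ℂ} (α β γ : ℂ)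

theorem hasResidueAt_cothCorrection
    (h₁ : HasResidueAt (fun w => α * coth ((w - p) / 3)) a r₁)
    (h₂ : HasResidueAt (fun w => β * coth ((w - (p + π * I)) / 3)) a r₂)
    (h₃ : HasResidueAt (fun w => γ * coth ((w - (p - π * I)) / 3)) a r₃)
    (h₄ : HasResidueAt (fun w => α * coth ((w - (-p + π * I)) / 3)) a r₄)
    (h₅ : HasResidueAt (fun w => β * coth ((w - -p) / 3)) a r₅)
    (h₆ : HasResidueAt (fun w => γ * coth ((w - (-p - π * I)) / 3)) a r₆)
    (hr : r₁ - r₂ - r₃ - r₄ + r₅ + r₆ = r) :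
    HasResidueAt (cothCorrection p α β γ) a r :=
  hr ▸ ((((h₁.sub h₂).sub h₃).sub h₄).add h₅).add h₆

theorem hasResidueAt_cothCorrection_neg (hp : p.re ≠ 0) :
    HasResidueAt (cothCorrection p α β γ) (-p) (3 * β) :=
  hasResidueAt_cothCorrection α β γ
    (hasResidueAt_mul_coth_div_three_of_re_ne_zero α (by simpa [neg_sub_left] using hp))
    (hasResidueAt_mul_coth_div_three_of_re_ne_zero β (by simpa [neg_sub_left] using hp))
    (hasResidueAt_mul_coth_div_three_of_re_ne_zero γ (by simpa [neg_sub_left] using hp))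
    (hasResidueAt_mul_coth_div_three_of_not_dvd α (-1) (by push_cast; ring) (by decide))
    (hasResidueAt_mul_coth_div_three_of_dvd β 0 (by push_cast; ring) (dvd_zero 3))
    (hasResidueAt_mul_coth_div_three_of_not_dvd γ 1 (by push_cast; ring) (by decide))
    (by ring)

theorem hasResidueAt_cothCorrection_add_pi_mul_I (hp : p.re ≠ 0) :
    HasResidueAt (cothCorrection p α β γ) (p + π * I) (-(3 * β)) :=
  hasResidueAt_cothCorrection α β γ
    (hasResidueAt_mul_coth_div_three_of_not_dvd α 1 (by push_cast; ring) (by decide))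
    (hasResidueAt_mul_coth_div_three_of_dvd β 0 (by push_cast; ring) (dvd_zero 3))
    (hasResidueAt_mul_coth_div_three_of_not_dvd γ 2 (by push_cast; ring) (by decide))
    (hasResidueAt_mul_coth_div_three_of_re_ne_zero α (by simpa [neg_sub_left] using hp))
    (hasResidueAt_mul_coth_div_three_of_re_ne_zero β (by simpa [neg_sub_left] using hp))
    (hasResidueAt_mul_coth_div_three_of_re_ne_zero γ (by simpa [neg_sub_left] using hp))
    (by ring)

theorem hasResidueAt_cothCorrection_sub_pi_mul_I (hp : p.re ≠ 0) :
    HasResidueAt (cothCorrection p α β γ) (p - π * I) (-(3 * γ)) :=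
  hasResidueAt_cothCorrection α β γ
    (hasResidueAt_mul_coth_div_three_of_not_dvd α (-1) (by push_cast; ring) (by decide))
    (hasResidueAt_mul_coth_div_three_of_not_dvd β (-2) (by push_cast; ring) (by decide))
    (hasResidueAt_mul_coth_div_three_of_dvd γ 0 (by push_cast; ring) (dvd_zero 3))
    (hasResidueAt_mul_coth_div_three_of_re_ne_zero α (by simpa [neg_sub_left] using hp))
    (hasResidueAt_mul_coth_div_three_of_re_ne_zero β (by simpa [neg_sub_left] using hp))
    (hasResidueAt_mul_coth_div_three_of_re_ne_zero γ (by simpa [neg_sub_left] using hp))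
    (by ring)

theorem hasResidueAt_cothCorrection_neg_add_two_pi_mul_I (hp : p.re ≠ 0) :
    HasResidueAt (cothCorrection p α β γ) (-p + 2 * π * I) (3 * γ) :=
  hasResidueAt_cothCorrection α β γ
    (hasResidueAt_mul_coth_div_three_of_re_ne_zero α (by simpa [neg_sub_left] using hp))
    (hasResidueAt_mul_coth_div_three_of_re_ne_zero β (by simpa [neg_sub_left] using hp))
    (hasResidueAt_mul_coth_div_three_of_re_ne_zero γ (by simpa [neg_sub_left] using hp))
    (hasResidueAt_mul_coth_div_three_of_not_dvd α 1 (by push_cast; ring) (by decide))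
    (hasResidueAt_mul_coth_div_three_of_not_dvd β 2 (by push_cast; ring) (by decide))
    (hasResidueAt_mul_coth_div_three_of_dvd γ 3 (by push_cast; ring) (dvd_refl 3))
    (by ring)

end CothCorrection

theorem hasResidueAt_sinh_two_mul_div {ω k a : ℂ} (hω : ω ≠ 0)
    (ha : ω ^ 2 * sinh a ^ 2 + k ^ 2 = 0) (h2a : sinh (2 * a) ≠ 0) :
    HasResidueAt (fun w => I * ω ^ 2 * sinh (2 * w) / (ω ^ 2 * sinh w ^ 2 + k ^ 2)) a I := by
  have hderiv : HasDerivAt (fun w => ω ^ 2 * sinh w ^ 2 + k ^ 2) (ω ^ 2 * sinh (2 * a)) a :=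
    ((((hasDerivAt_sinh a).pow 2).const_mul (ω ^ 2)).add_const (k ^ 2)).congr_deriv <| by
      rw [sinh_two_mul]; ring
  convert HasResidueAt.div_of_hasDerivAt (f := fun w => I * ω ^ 2 * sinh (2 * w)) (by fun_prop)
    hderiv ha (mul_ne_zero (pow_ne_zero 2 hω) h2a) using 1
  field_simp

theorem hasResidueAt_weighted_sinh_two_mul_div {ω k a : ℂ} (hω : ω ≠ 0) (hk : k ≠ 0)
    (hsa : sinh a = -(I * k / ω)) (hca : cosh a ≠ 0) :
    HasResidueAt (fun w => (π + 2 * I * w) / (6 * π) *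
      (I * ω ^ 2 * sinh (2 * w) / (ω ^ 2 * sinh w ^ 2 + k ^ 2))) a (I / 6 - a / (3 * π)) := by
  have hpole : ω ^ 2 * sinh a ^ 2 + k ^ 2 = 0 := by
    rw [hsa, neg_sq, div_pow, mul_pow, I_sq]; field_simp; ring
  have h2a : sinh (2 * a) ≠ 0 := by
    rw [sinh_two_mul, hsa]; simp [hk, hω, hca]
  convert (hasResidueAt_sinh_two_mul_div hω hpole h2a).continuousAt_mul
    (g := fun w => (π + 2 * I * w) / (6 * π)) (by fun_prop) using 1
  field_simp; ring_nf; rw [I_sq]; ring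

theorem v_has_vanishing_residues_at_removable_points_general
    (ω : ℂ) (hω : 0 < ω.im) (k : ℝ) (hk : 0 < k)
    (G₂ m : ℂ → ℂ)
    (hG₂ : ∀ w : ℂ, G₂ w = I * ω ^ 2 * Complex.sinh (2 * w) /
      (ω ^ 2 * (Complex.sinh w) ^ 2 + (k : ℂ) ^ 2))
    (hm : ∀ w : ℂ, m w = ((Real.pi + 2 * I * w) / (6 * Real.pi)) * G₂ w)
    (p₁ : ℂ) (hp : Complex.sinh p₁ = I * k / ω) (hc : Complex.cosh p₁ ≠ 0)
    (hre : p₁.re ≠ 0)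
    (m₁ m₂ m₃ : ℂ)
    (hm₂ : m₂ = -p₁ / (3 * Real.pi) - I / 6)
    (hm₃ : m₃ = -p₁ / (3 * Real.pi) + I / 2)
    (Q : ℂ → ℂ)
    (hQ : ∀ w : ℂ, Q w =
      ((I - m₁) / 3) * Complex.coth ((w - p₁) / 3)
      - (m₂ / 3) * Complex.coth ((w - p₁ - Real.pi * I) / 3)
      - (m₃ / 3) * Complex.coth ((w - p₁ + Real.pi * I) / 3)
      - ((I - m₁) / 3) * Complex.coth ((w + p₁ - Real.pi * I) / 3)
      + (m₂ / 3) * Complex.coth ((w + p₁) / 3)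
      + (m₃ / 3) * Complex.coth ((w + p₁ + Real.pi * I) / 3)) :
    Tendsto (fun w => (w - (-p₁)) * (m w + Q w)) (𝓝[≠] (-p₁)) (𝓝 0) ∧
    Tendsto (fun w => (w - (p₁ + Real.pi * I)) * (m w + Q w))
      (𝓝[≠] (p₁ + Real.pi * I)) (𝓝 0) ∧
    Tendsto (fun w => (w - (p₁ - Real.pi * I)) * (m w + Q w))
      (𝓝[≠] (p₁ - Real.pi * I)) (𝓝 0) ∧
    Tendsto (fun w => (w - (-p₁ + 2 * Real.pi * I)) * (m w + Q w))
      (𝓝[≠] (-p₁ + 2 * Real.pi * I)) (𝓝 0) := by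
  have hω₀ : ω ≠ 0 := by rintro rfl; simp at hω
  have hk₀ : (k : ℂ) ≠ 0 := ofReal_ne_zero.2 hk.ne'
  have hres_m (a : ℂ) (hsa : sinh a = -sinh p₁) (hca : cosh a ≠ 0) :
      HasResidueAt m a (I / 6 - a / (3 * π)) := by
    convert hasResidueAt_weighted_sinh_two_mul_div hω₀ hk₀ (by rw [hsa, hp]) hca using 1
    funext w; rw [hm, hG₂]
  obtain rfl : Q = cothCorrection p₁ ((I - m₁) / 3) (m₂ / 3) (m₃ / 3) := by
    funext w; rw [hQ, cothCorrection]; ring_nf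
  refine ⟨?_, ?_, ?_, ?_⟩ <;> show HasResidueAt (fun w => m w + cothCorrection _ _ _ _ w) _ 0
  · convert (hres_m _ (sinh_neg p₁) (by rwa [cosh_neg])).add
      (hasResidueAt_cothCorrection_neg _ _ _ hre) using 1
    rw [hm₂]; ring
  · convert (hres_m _ (sinh_add_pi_mul_I p₁) (by rwa [cosh_add_pi_mul_I, neg_ne_zero])).add
      (hasResidueAt_cothCorrection_add_pi_mul_I _ _ _ hre) using 1
    rw [hm₂]; field_simp; ring
  · convert (hres_m _ (sinh_sub_pi_mul_I p₁) (by rwa [cosh_sub_pi_mul_I, neg_ne_zero])).add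
      (hasResidueAt_cothCorrection_sub_pi_mul_I _ _ _ hre) using 1
    rw [hm₃]; field_simp; ring
  · convert (hres_m _ (by rw [sinh_periodic, sinh_neg]) (by rwa [cosh_periodic, cosh_neg])).add
      (hasResidueAt_cothCorrection_neg_add_two_pi_mul_I _ _ _ hre) using 1
    rw [hm₃]; field_simp; ring

theorem v_has_vanishing_residues_at_removable_points
    (ω : ℂ) (hω : 0 < ω.im) (k : ℝ) (hk : 0 < k)
    (G₂ m : ℂ → ℂ)
    (hG₂ : ∀ w : ℂ, G₂ w = I * ω ^ 2 * Complex.sinh (2 * w) /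
      (ω ^ 2 * (Complex.sinh w) ^ 2 + (k : ℂ) ^ 2))
    (hm : ∀ w : ℂ, m w = ((Real.pi + 2 * I * w) / (6 * Real.pi)) * G₂ w)
    (p₁ : ℂ) (hp : Complex.sinh p₁ = I * k / ω) (hc : Complex.cosh p₁ ≠ 0)
    (hre : p₁.re ≠ 0)
    (m₁ m₂ m₃ : ℂ)
    (hm₁ : m₁ = -p₁ / (3 * Real.pi) + I / 6)
    (hm₂ : m₂ = -p₁ / (3 * Real.pi) - I / 6)
    (hm₃ : m₃ = -p₁ / (3 * Real.pi) + I / 2)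
    (Q : ℂ → ℂ)
    (hQ : ∀ w : ℂ, Q w =
      ((I - m₁) / 3) * Complex.coth ((w - p₁) / 3)
      - (m₂ / 3) * Complex.coth ((w - p₁ - Real.pi * I) / 3)
      - (m₃ / 3) * Complex.coth ((w - p₁ + Real.pi * I) / 3)
      - ((I - m₁) / 3) * Complex.coth ((w + p₁ - Real.pi * I) / 3)
      + (m₂ / 3) * Complex.coth ((w + p₁) / 3)
      + (m₃ / 3) * Complex.coth ((w + p₁ + Real.pi * I) / 3)) :
    Tendsto (fun w => (w - (-p₁)) * (m w + Q w)) (𝓝[≠] (-p₁)) (𝓝 0) ∧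
    Tendsto (fun w => (w - (p₁ + Real.pi * I)) * (m w + Q w))
      (𝓝[≠] (p₁ + Real.pi * I)) (𝓝 0) ∧
    Tendsto (fun w => (w - (p₁ - Real.pi * I)) * (m w + Q w))
      (𝓝[≠] (p₁ - Real.pi * I)) (𝓝 0) ∧
    Tendsto (fun w => (w - (-p₁ + 2 * Real.pi * I)) * (m w + Q w))
      (𝓝[≠] (-p₁ + 2 * Real.pi * I)) (𝓝 0) :=
  v_has_vanishing_residues_at_removable_points_general ω hω k hk G₂ m hG₂ hm p₁ hp hc hre m₁ m₂ m₃
    hm₂ hm₃ Q hQ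
end
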